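/- arXiv:1611.06728 — 3 statements merged into one kernel-verified Lean document; each statement's English description precedes it below -/
import Mathlib

section
/- Let f : ℝ^n → ℝ^n and g : ℝ^n × ℝ^m → ℝ^n be locally Lipschitz maps such that f is essentially nonnegative and, for every u ∈ ℝ^m with u ≥ 0 (componentwise), the map X ↦ g(X,u) is essentially nonnegative. Let u : [t₀,∞) → ℝ^m be a continuous control with u(t) ≥ 0 (componentwise) for all t ≥ t₀, and let X : [t₀,∞) → ℝ^n be a differentiable function satisfying X'(t) = f(X(t)) + g(X(t), u(t)) for all t ≥ t₀. If X(t₀) ≥ 0 (componentwise), then X(t) ≥ 0 (componentwise) for all t ≥ t₀. -/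
/-!
Let `v t = ‖(X t)⁻‖` (sup norm), the distance from `X t` to the orthant. A coordinate with
`X t i ≤ 0` satisfies `F(X)ᵢ ≥ F(X⁺)ᵢ - L‖X - X⁺‖ ≥ -L v`, by essential nonnegativity at `X⁺`
and a Lipschitz bound for `F = f + g(·, u t)` on a compact set containing `X` and `X⁺` up to
time `b`. Hence the upper right Dini derivative of `v` is at most `L v`, and since `v t₀ = 0`,
Grönwall's inequality gives `v = 0` on `[t₀, b]`.
-/

/-- A map `f : ℝ^n → ℝ^n` is essentially nonnegative if `f_i(X) ≥ 0` whenever `X ≥ 0`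
componentwise and `X_i = 0`. -/
def EssentiallyNonneg {n : ℕ} (f : (Fin n → ℝ) → (Fin n → ℝ)) : Prop :=
  ∀ i : Fin n, ∀ X : Fin n → ℝ, (∀ j, 0 ≤ X j) → X i = 0 → 0 ≤ f X i

open Set Filter Topology
open scoped NNReal

theorem LipschitzOnWith.uncurry_right {α β γ : Type*} [PseudoEMetricSpace α]
    [PseudoEMetricSpace β] [PseudoEMetricSpace γ] {f : α → β → γ} {K : ℝ≥0} {s : Set α}
    {t : Set β} (hf : LipschitzOnWith K (fun p : α × β => f p.1 p.2) (s ×ˢ t)) {y : β}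
    (hy : y ∈ t) : LipschitzOnWith K (fun x => f x y) s := by
  have h := hf.comp (LipschitzWith.prodMk_right y).lipschitzOnWith fun _ hx => ⟨hx, hy⟩
  rwa [mul_one] at h

theorem EssentiallyNonneg.add {n : ℕ} {f g : (Fin n → ℝ) → Fin n → ℝ}
    (hf : EssentiallyNonneg f) (hg : EssentiallyNonneg g) : EssentiallyNonneg (f + g) :=
  fun i X hX hXi => add_nonneg (hf i X hX hXi) (hg i X hX hXi)

theorem EssentiallyNonneg.neg_mul_norm_negPart_le {n : ℕ} {F : (Fin n → ℝ) → Fin n → ℝ}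
    (hF : EssentiallyNonneg F) {K : ℝ≥0} {s : Set (Fin n → ℝ)} (hFs : LipschitzOnWith K F s)
    {x : Fin n → ℝ} (hx : x ∈ s) (hx' : x⁺ ∈ s) {i : Fin n} (hi : x i ≤ 0) :
    -(K * ‖x⁻‖) ≤ F x i := by
  have hpos : 0 ≤ F x⁺ i :=
    hF i x⁺ (fun j => posPart_nonneg (x j)) (by simp [posPart_eq_zero.mpr hi])
  have hdist : dist (F x⁺) (F x) ≤ K * ‖x⁻‖ := by
    have hsub : x⁺ - x = x⁻ := by
      rw [sub_eq_iff_eq_add, ← sub_eq_iff_eq_add', posPart_sub_negPart]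
    simpa only [dist_eq_norm x⁺, hsub] using hFs.dist_le_mul _ hx' _ hx
  have hcoord : F x⁺ i - F x i ≤ dist (F x⁺) (F x) :=
    (le_abs_self _).trans (dist_le_pi_dist (F x⁺) (F x) i)
  linarith

theorem eventually_negPart_le_of_hasDerivWithinAt {x : ℝ → ℝ} {d c M ε t : ℝ}
    (hx : HasDerivWithinAt x d (Ioi t) t) (hc : (x t)⁻ ≤ c) (hd : x t ≤ 0 → -M ≤ d)
    (hM : 0 ≤ M) (hε : 0 < ε) :
    ∀ᶠ z in 𝓝[>] t, (x z)⁻ ≤ c + (z - t) * (M + ε) := by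
  have hbound_nonneg : ∀ z, t < z → 0 ≤ c + (z - t) * (M + ε) := fun z hz =>
    add_nonneg ((negPart_nonneg _).trans hc) (mul_nonneg (sub_nonneg.2 hz.le) (by positivity))
  rcases lt_or_ge 0 (x t) with hpos | hnonpos
  · filter_upwards [hx.continuousWithinAt.eventually_const_lt hpos, self_mem_nhdsWithin]
      with z hz hzt
    rw [negPart_eq_zero.mpr hz.le]
    exact hbound_nonneg z hzt
  · have hslope : ∀ᶠ z in 𝓝[>] t, d - ε < slope x t z :=
      ((hasDerivWithinAt_iff_tendsto_slope' (lt_irrefl t)).mp hx).eventually_const_lt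
        (by linarith)
    filter_upwards [hslope, self_mem_nhdsWithin] with z hz hzt
    have hzt' : 0 < z - t := sub_pos.2 hzt
    rw [slope_def_field, lt_div_iff₀ hzt'] at hz
    have hxt : -x t ≤ c := by rwa [negPart_eq_neg.mpr hnonpos] at hc
    rw [negPart_def]
    refine max_le ?_ (hbound_nonneg z hzt)
    nlinarith [hd hnonpos]

theorem eventually_norm_negPart_le_of_hasDerivWithinAt {ι : Type*} [Fintype ι]
    {X : ℝ → ι → ℝ} {V : ι → ℝ} {t L ε : ℝ} (hX : HasDerivWithinAt X V (Ioi t) t)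
    (hV : ∀ i, X t i ≤ 0 → -(L * ‖(X t)⁻‖) ≤ V i) (hL : 0 ≤ L) (hε : 0 < ε) :
    ∀ᶠ z in 𝓝[>] t, ‖(X z)⁻‖ ≤ ‖(X t)⁻‖ + (z - t) * (L * ‖(X t)⁻‖ + ε) := by
  have hcoord : ∀ i, ∀ᶠ z in 𝓝[>] t, (X z i)⁻ ≤ ‖(X t)⁻‖ + (z - t) * (L * ‖(X t)⁻‖ + ε) :=
    fun i => eventually_negPart_le_of_hasDerivWithinAt (hasDerivWithinAt_pi.mp hX i)
      ((le_abs_self _).trans (norm_le_pi_norm (X t)⁻ i)) (hV i) (by positivity) hε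
  filter_upwards [eventually_all.mpr hcoord, self_mem_nhdsWithin] with z hz hzt
  have hzt' : 0 < z - t := sub_pos.2 hzt
  rw [pi_norm_le_iff_of_nonneg (by positivity)]
  intro i
  rw [Pi.negPart_apply, Real.norm_of_nonneg (negPart_nonneg _)]
  exact hz i

theorem nonneg_of_hasDerivWithinAt_of_neg_mul_norm_negPart_le {ι : Type*} [Fintype ι]
    {X V : ℝ → ι → ℝ} {a b L : ℝ} (hL : 0 ≤ L) (hX : ContinuousOn X (Icc a b))
    (hX' : ∀ t ∈ Ico a b, HasDerivWithinAt X (V t) (Ici t) t)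
    (hV : ∀ t ∈ Ico a b, ∀ i, X t i ≤ 0 → -(L * ‖(X t)⁻‖) ≤ V t i) (ha : 0 ≤ X a) :
    ∀ t ∈ Icc a b, 0 ≤ X t := by
  set v : ℝ → ℝ := fun t => ‖(X t)⁻‖
  have hneg : Continuous fun y : ι → ℝ => y⁻ :=
    continuous_pi fun i => (continuous_apply i).neg.max continuous_const
  have hv : ContinuousOn v (Icc a b) := (continuous_norm.comp hneg).comp_continuousOn hX
  have hslope : ∀ t ∈ Ico a b, ∀ r, L * v t < r →
      ∃ᶠ z in 𝓝[>] t, (z - t)⁻¹ * (v z - v t) < r := by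
    intro t ht r hr
    have hε : 0 < (r - L * v t) / 2 := by linarith
    refine Eventually.frequently ?_
    filter_upwards [eventually_norm_negPart_le_of_hasDerivWithinAt
      ((hX' t ht).mono Ioi_subset_Ici_self) (hV t ht) hL hε, self_mem_nhdsWithin] with z hz hzt
    rw [inv_mul_lt_iff₀ (sub_pos.2 hzt.out)]
    nlinarith [sub_pos.2 hzt.out]
  intro t ht
  have hvt := le_gronwallBound_of_liminf_deriv_right_le (δ := 0) (K := L) (ε := 0) hv hslope
    (by simp [v, negPart_eq_zero.mpr ha]) (fun _ _ => by simp) t ht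
  rw [gronwallBound_ε0_δ0] at hvt
  exact negPart_eq_zero.mp (norm_le_zero_iff.mp hvt)

/-- Nonnegativity of controlled systems `X' = f(X) + g(X,u)`: if `f` and `g(·,u)`
(for every componentwise-nonnegative `u`) are essentially nonnegative, both locally
Lipschitz, the control `u(t)` is continuous and componentwise nonnegative on `[t₀,∞)`,
and `X` solves the ODE on `[t₀,∞)` with `X(t₀) ≥ 0` componentwise, then `X(t) ≥ 0`
componentwise for all `t ≥ t₀`. -/
theorem nonneg_orthant_invariant
    (n m : ℕ)
    (f : (Fin n → ℝ) → (Fin n → ℝ))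
    (g : (Fin n → ℝ) → (Fin m → ℝ) → (Fin n → ℝ))
    (hf_lip : LocallyLipschitz f)
    (hg_lip : LocallyLipschitz (fun p : (Fin n → ℝ) × (Fin m → ℝ) => g p.1 p.2))
    (hf_en : EssentiallyNonneg f)
    (hg_en : ∀ u : Fin m → ℝ, (∀ j, 0 ≤ u j) → EssentiallyNonneg (fun X => g X u))
    (t₀ : ℝ) (u : ℝ → Fin m → ℝ)
    (hu_cont : ContinuousOn u (Set.Ici t₀))
    (hu_nonneg : ∀ t ∈ Set.Ici t₀, ∀ j, 0 ≤ u t j)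
    (X : ℝ → Fin n → ℝ)
    (hX : ∀ t ∈ Set.Ici t₀, HasDerivAt X (f (X t) + g (X t) (u t)) t)
    (hX₀ : ∀ i, 0 ≤ X t₀ i) :
    ∀ t ∈ Set.Ici t₀, ∀ i, 0 ≤ X t i := by
  intro b hb
  have hXc : ContinuousOn X (Icc t₀ b) := fun t ht =>
    (hX t ht.1).continuousAt.continuousWithinAt
  have hposPart : Continuous fun y : Fin n → ℝ => y⁺ :=
    continuous_pi fun i => (continuous_apply i).max continuous_const
  set s := X '' Icc t₀ b ∪ (fun t => (X t)⁺) '' Icc t₀ b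
  have hs : IsCompact s := (isCompact_Icc.image_of_continuousOn hXc).union
    (isCompact_Icc.image_of_continuousOn (hposPart.comp_continuousOn hXc))
  have hU : IsCompact (u '' Icc t₀ b) :=
    isCompact_Icc.image_of_continuousOn (hu_cont.mono Icc_subset_Ici_self)
  obtain ⟨Kf, hKf⟩ := hf_lip.locallyLipschitzOn.exists_lipschitzOnWith_of_compact hs
  obtain ⟨Kg, hKg⟩ := hg_lip.locallyLipschitzOn.exists_lipschitzOnWith_of_compact (hs.prod hU)
  refine nonneg_of_hasDerivWithinAt_of_neg_mul_norm_negPart_le (Kf + Kg).2 hXc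
    (fun t ht => (hX t ht.1).hasDerivWithinAt) ?_ hX₀ b ⟨hb, le_rfl⟩
  intro t ht i hi
  have htb : t ∈ Icc t₀ b := Ico_subset_Icc_self ht
  have hgt := hKg.uncurry_right (mem_image_of_mem u htb)
  exact (hf_en.add (hg_en (u t) (hu_nonneg t ht.1))).neg_mul_norm_negPart_le (hKf.add hgt)
    (Or.inl (mem_image_of_mem X htb)) (Or.inr (mem_image_of_mem (fun t => (X t)⁺) htb)) hi
end

section
/- Assume all parameters α_H, α_L, ρ_H, ρ_L, μ, x, y, δ_A, δ_C, v_b, β_A, β_C, λ_H, λ_L are nonnegative, π ∈ [0,1], and r_b > 0. Then the right-hand side of the HIV model system is essentially nonnegative on the set where N_H > 0, N_L > 0, θ > 0 and r_b N_H + N_L > 0, for every nonnegative control pair (u_P, u_T): that is, for each coordinate j ∈ {1,…,9}, if X ∈ ℝ^9 has all components nonnegative, satisfies the above positivity conditions, and its j-th component is zero, and u_P ≥ 0, u_T ≥ 0, then the j-th component of the right-hand side evaluated at (X, u_P, u_T) is nonnegative. -/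
noncomputable section

namespace HIVModel

/-- State vector indexing: `X = (S_H, S_L, I_CH, I_CL, I_AH, I_AL, T_H, T_L, P)`,
i.e. `X 0 = S_H`, `X 1 = S_L`, `X 2 = I_CH`, `X 3 = I_CL`, `X 4 = I_AH`, `X 5 = I_AL`,
`X 6 = T_H`, `X 7 = T_L`, `X 8 = P`. -/
abbrev State := Fin 9 → ℝ

/-- Total population `N`. -/
def Ntot (X : State) : ℝ := X 0 + X 1 + X 2 + X 3 + X 4 + X 5 + X 6 + X 7 + X 8

/-- High-risk population `N_H = S_H + I_AH + I_CH + P + T_H`. -/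
def NH (X : State) : ℝ := X 0 + X 4 + X 2 + X 8 + X 6

/-- Low-risk population `N_L = S_L + I_AL + I_CL + T_L`. -/
def NL (X : State) : ℝ := X 1 + X 5 + X 3 + X 7

/-- Total contact rate `θ = λ_H N_H + λ_L N_L`. -/
def theta (lamH lamL : ℝ) (X : State) : ℝ := lamH * NH X + lamL * NL X

/-- Per-contact transmission probability at the mixing site. -/
def sigma (betaA betaC lamH lamL : ℝ) (X : State) : ℝ :=
  (betaA * (lamH * X 4 + lamL * X 5) + betaC * (lamH * X 2 + lamL * X 3)) /
    theta lamH lamL X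

/-- Per-capita transmission rate for high-risk susceptibles. -/
def phiH (betaA betaC lamH lamL piv : ℝ) (X : State) : ℝ :=
  piv * lamH * (betaA * X 4 + betaC * X 2) / NH X +
    (1 - piv) * lamH * sigma betaA betaC lamH lamL X

/-- Per-capita transmission rate for low-risk susceptibles. -/
def phiL (betaA betaC lamH lamL piv : ℝ) (X : State) : ℝ :=
  piv * lamL * (betaA * X 5 + betaC * X 3) / NL X +
    (1 - piv) * lamL * sigma betaA betaC lamH lamL X

/-- PrEP enrollment function `ζ_P = r_b S_H / (r_b N_H + N_L)`. -/
def zetaP (rb : ℝ) (X : State) : ℝ := rb * X 0 / (rb * NH X + NL X)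

/-- TaP enrollment function for high-risk `ζ_{T,H} = r_b I_CH / (r_b N_H + N_L)`. -/
def zetaTH (rb : ℝ) (X : State) : ℝ := rb * X 2 / (rb * NH X + NL X)

/-- TaP enrollment function for low-risk `ζ_{T,L} = I_CL / (r_b N_H + N_L)`. -/
def zetaTL (rb : ℝ) (X : State) : ℝ := X 3 / (rb * NH X + NL X)

/-- Right-hand side of the HIV model system with controls `uP`, `uT`. -/
def rhs (alphaH alphaL rhoH rhoL mu x y deltaA deltaC vb betaA betaC lamH lamL piv rb : ℝ)
    (X : State) (uP uT : ℝ) : State :=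
  ![alphaH - (phiH betaA betaC lamH lamL piv X + rhoH + mu) * X 0 + rhoL * X 1
      + x * X 8 - uP * zetaP rb X * Ntot X,
    alphaL - (phiL betaA betaC lamH lamL piv X + rhoL + mu) * X 1 + rhoH * (X 0 + X 8),
    deltaA * X 4 - (rhoH + mu + deltaC + vb) * X 2 + rhoL * X 3 + y * X 6
      - uT * zetaTH rb X * Ntot X,
    deltaA * X 5 - (rhoL + mu + deltaC + vb) * X 3 + rhoH * X 2 + y * X 7
      - uT * zetaTL rb X * Ntot X,
    phiH betaA betaC lamH lamL piv X * X 0 - (rhoH + mu + deltaA) * X 4 + rhoL * X 5,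
    phiL betaA betaC lamH lamL piv X * X 1 - (rhoL + mu + deltaA) * X 5 + rhoH * X 4,
    -(y + rhoH + mu) * X 6 + vb * X 2 + rhoL * X 7 + uT * zetaTH rb X * Ntot X,
    -(y + rhoL + mu) * X 7 + vb * X 3 + rhoH * X 6 + uT * zetaTL rb X * Ntot X,
    -(x + rhoH + mu) * X 8 + uP * zetaP rb X * Ntot X]

end HIVModel

open HIVModel in
/-- The right-hand side of the HIV model system is essentially nonnegative on the set
where `N_H > 0`, `N_L > 0`, `θ > 0` and `r_b N_H + N_L > 0`, for every nonnegative
control pair `(u_P, u_T)`. -/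
theorem hiv_rhs_essentially_nonneg
    (alphaH alphaL rhoH rhoL mu x y deltaA deltaC vb betaA betaC lamH lamL piv rb : ℝ)
    (halphaH : 0 ≤ alphaH) (halphaL : 0 ≤ alphaL) (hrhoH : 0 ≤ rhoH) (hrhoL : 0 ≤ rhoL)
    (hmu : 0 ≤ mu) (hx : 0 ≤ x) (hy : 0 ≤ y) (hdeltaA : 0 ≤ deltaA) (hdeltaC : 0 ≤ deltaC)
    (hvb : 0 ≤ vb) (hbetaA : 0 ≤ betaA) (hbetaC : 0 ≤ betaC)
    (hlamH : 0 ≤ lamH) (hlamL : 0 ≤ lamL)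
    (hpiv : piv ∈ Set.Icc (0 : ℝ) 1) (hrb : 0 < rb)
    (X : State) (hX : ∀ i, 0 ≤ X i)
    (hNH : 0 < NH X) (hNL : 0 < NL X) (htheta : 0 < theta lamH lamL X)
    (hden : 0 < rb * NH X + NL X)
    (uP uT : ℝ) (huP : 0 ≤ uP) (huT : 0 ≤ uT) :
    ∀ j : Fin 9, X j = 0 →
      0 ≤ rhs alphaH alphaL rhoH rhoL mu x y deltaA deltaC vb betaA betaC lamH lamL piv rb
            X uP uT j := by
  obtain ⟨hpiv0, hpiv1⟩ := hpiv
  have hX0 := hX 0; have hX1 := hX 1; have hX2 := hX 2; have hX3 := hX 3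
  have hX4 := hX 4; have hX5 := hX 5; have hX6 := hX 6; have hX7 := hX 7
  have hX8 := hX 8
  have hpiv1' : 0 ≤ 1 - piv := by linarith
  have hsig : 0 ≤ sigma betaA betaC lamH lamL X := by
    unfold sigma; exact div_nonneg (by positivity) htheta.le
  have hphiH : 0 ≤ phiH betaA betaC lamH lamL piv X := by
    unfold phiH
    have h1 : 0 ≤ piv * lamH * (betaA * X 4 + betaC * X 2) / NH X := by positivity
    have h2 : 0 ≤ (1 - piv) * lamH * sigma betaA betaC lamH lamL X := by positivity
    linarith
  have hphiL : 0 ≤ phiL betaA betaC lamH lamL piv X := by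
    unfold phiL
    have h1 : 0 ≤ piv * lamL * (betaA * X 5 + betaC * X 3) / NL X := by positivity
    have h2 : 0 ≤ (1 - piv) * lamL * sigma betaA betaC lamH lamL X := by positivity
    linarith
  have hN : 0 ≤ Ntot X := by unfold Ntot; positivity
  have hzTH : 0 ≤ zetaTH rb X := by unfold zetaTH; positivity
  have hzTL : 0 ≤ zetaTL rb X := by unfold zetaTL; positivity
  have hzP : 0 ≤ zetaP rb X := by unfold zetaP; positivity
  set R := rhs alphaH alphaL rhoH rhoL mu x y deltaA deltaC vb betaA betaC lamH lamL piv rb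
    X uP uT with hR
  have e0 : R 0 = alphaH - (phiH betaA betaC lamH lamL piv X + rhoH + mu) * X 0 + rhoL * X 1
      + x * X 8 - uP * zetaP rb X * Ntot X := rfl
  have e1 : R 1 = alphaL - (phiL betaA betaC lamH lamL piv X + rhoL + mu) * X 1
      + rhoH * (X 0 + X 8) := rfl
  have e2 : R 2 = deltaA * X 4 - (rhoH + mu + deltaC + vb) * X 2 + rhoL * X 3 + y * X 6
      - uT * zetaTH rb X * Ntot X := rfl
  have e3 : R 3 = deltaA * X 5 - (rhoL + mu + deltaC + vb) * X 3 + rhoH * X 2 + y * X 7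
      - uT * zetaTL rb X * Ntot X := rfl
  have e4 : R 4 = phiH betaA betaC lamH lamL piv X * X 0 - (rhoH + mu + deltaA) * X 4
      + rhoL * X 5 := rfl
  have e5 : R 5 = phiL betaA betaC lamH lamL piv X * X 1 - (rhoL + mu + deltaA) * X 5
      + rhoH * X 4 := rfl
  have e6 : R 6 = -(y + rhoH + mu) * X 6 + vb * X 2 + rhoL * X 7
      + uT * zetaTH rb X * Ntot X := rfl
  have e7 : R 7 = -(y + rhoL + mu) * X 7 + vb * X 3 + rhoH * X 6
      + uT * zetaTL rb X * Ntot X := rfl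
  have e8 : R 8 = -(x + rhoH + mu) * X 8 + uP * zetaP rb X * Ntot X := rfl
  intro j hj
  fin_cases j
  · have hj' : X 0 = 0 := hj
    have hz : zetaP rb X = 0 := by rw [zetaP, hj']; simp
    show 0 ≤ R 0
    rw [e0, hj', hz]; ring_nf; positivity
  · have hj' : X 1 = 0 := hj
    show 0 ≤ R 1
    rw [e1, hj']; ring_nf; positivity
  · have hj' : X 2 = 0 := hj
    have hz : zetaTH rb X = 0 := by rw [zetaTH, hj']; simp
    show 0 ≤ R 2
    rw [e2, hj', hz]; ring_nf; positivity
  · have hj' : X 3 = 0 := hj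
    have hz : zetaTL rb X = 0 := by rw [zetaTL, hj']; simp
    show 0 ≤ R 3
    rw [e3, hj', hz]; ring_nf; positivity
  · have hj' : X 4 = 0 := hj
    show 0 ≤ R 4
    rw [e4, hj']; ring_nf; positivity
  · have hj' : X 5 = 0 := hj
    show 0 ≤ R 5
    rw [e5, hj']; ring_nf; positivity
  · have hj' : X 6 = 0 := hj
    show 0 ≤ R 6
    rw [e6, hj']; ring_nf; positivity
  · have hj' : X 7 = 0 := hj
    show 0 ≤ R 7
    rw [e7, hj']; ring_nf; positivity
  · have hj' : X 8 = 0 := hj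
    show 0 ≤ R 8
    rw [e8, hj']; ring_nf; positivity
end
end

section
/- Assume all parameters α_H, α_L, ρ_H, ρ_L, μ, x, y, δ_A, δ_C, v_b, β_A, β_C, λ_H, λ_L are nonnegative, π ∈ [0,1], and r_b > 0. Let u_P, u_T : [t₀, T] → ℝ be continuous controls with u_P(t) ≥ 0 and u_T(t) ≥ 0 for all t, and let X : [t₀, T] → ℝ^9 be a differentiable function satisfying the HIV model system X'(t) = F(X(t), u_P(t), u_T(t)) for all t ∈ [t₀, T], such that along the solution N_H(X(t)) > 0, N_L(X(t)) > 0, θ(X(t)) > 0 and r_b N_H(X(t)) + N_L(X(t)) > 0 for all t ∈ [t₀, T]. If all components of X(t₀) are nonnegative, then all components of X(t) are nonnegative for every t ∈ [t₀, T]. -/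
/-!
Let `g(t) = ∑ᵢ (Xᵢ(t)⁻)²`, which vanishes at `t₀`. Then `g' = -2 ∑ᵢ Xᵢ⁻ Fᵢ`, and only the
coordinates with `Xᵢ < 0` contribute. At such a coordinate the system is quasi-positive: every
term of `Fᵢ` is a nonnegative constant, a multiple of `Xᵢ` itself, a nonnegative multiple of
another coordinate, or the bilinear infection term `φ_H S_H` (resp. `φ_L S_L`), and `φ_H ≥ -c · ∑ⱼ Xⱼ⁻` because
`φ_H` is linear in the infected classes with nonnegative coefficients. Hence `-Fᵢ` is at most a
rate times `∑ⱼ Xⱼ⁻`; the rate is continuous along the solution, so bounded on `[t₀, T]`, which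
gives `g' ≤ C g`, and Grönwall's inequality forces `g ≡ 0`.
-/

noncomputable section

open Set Filter Asymptotics

section NegativePart

theorem abs_negPart_sq_sub_sub_le (x y : ℝ) :
    |y⁻ ^ 2 - x⁻ ^ 2 - (y - x) * (-2 * x⁻)| ≤ (y - x) ^ 2 := by
  rcases le_total x 0 with hx | hx <;> rcases le_total y 0 with hy | hy <;>
    simp only [negPart_eq_neg.2, negPart_eq_zero.2, *] <;> rw [abs_le] <;> constructor <;>
    nlinarith

theorem hasDerivAt_negPart_sq (x : ℝ) : HasDerivAt (fun y : ℝ => y⁻ ^ 2) (-2 * x⁻) x :=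
  .of_isLittleO <| (IsBigO.of_bound 1 <| Eventually.of_forall fun y => by
      simpa [Real.norm_eq_abs] using abs_negPart_sq_sub_sub_le x y).trans_isLittleO
    (isLittleO_pow_sub_sub x one_lt_two)

variable {ι : Type*} [Fintype ι]

theorem neg_sum_negPart_le (v : ι → ℝ) (i : ι) : -∑ j, (v j)⁻ ≤ v i :=
  neg_le.1 <| (neg_le_negPart _).trans <|
    Finset.single_le_sum (fun j _ => negPart_nonneg (v j)) (Finset.mem_univ i)

theorem nonneg_of_neg_deriv_le_mul_sum_negPart {X F : ℝ → ι → ℝ} {a b K : ℝ}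
    (hX : ContinuousOn X (Icc a b)) (hX' : ∀ t ∈ Ico a b, HasDerivWithinAt X (F t) (Ici t) t)
    (hF : ∀ t ∈ Ico a b, ∀ i, X t i < 0 → -F t i ≤ K * ∑ j, (X t j)⁻)
    (ha : ∀ i, 0 ≤ X a i) :
    ∀ t ∈ Icc a b, ∀ i, 0 ≤ X t i := by
  set g : ℝ → ℝ := fun t => ∑ i, (X t i)⁻ ^ 2
  have hg : ContinuousOn g (Icc a b) := by
    have := continuous_negPart (α := ℝ)
    fun_prop
  have hg' : ∀ t ∈ Ico a b, HasDerivWithinAt g (∑ i, -2 * (X t i)⁻ * F t i) (Ici t) t :=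
    fun t ht => HasDerivWithinAt.fun_sum fun i _ =>
      (hasDerivAt_negPart_sq _).comp_hasDerivWithinAt t (hasDerivWithinAt_pi.1 (hX' t ht) i)
  have bound : ∀ t ∈ Ico a b,
      ∑ i, -2 * (X t i)⁻ * F t i ≤ 2 * |K| * Fintype.card ι * g t + 0 := by
    intro t ht
    set S := ∑ j, (X t j)⁻
    have hterm : ∀ i, -2 * (X t i)⁻ * F t i ≤ 2 * K * S * (X t i)⁻ := by
      intro i
      rcases lt_or_ge (X t i) 0 with hi | hi
      · nlinarith [hF t ht i hi, negPart_nonneg (X t i)]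
      · simp [negPart_eq_zero.2 hi]
    calc ∑ i, -2 * (X t i)⁻ * F t i
        ≤ ∑ i, 2 * K * S * (X t i)⁻ := Finset.sum_le_sum fun i _ => hterm i
      _ = 2 * K * S ^ 2 := by rw [← Finset.mul_sum]; ring
      _ ≤ 2 * |K| * S ^ 2 := by gcongr; exact le_abs_self K
      _ ≤ 2 * |K| * (Fintype.card ι * g t) := by gcongr; exact sq_sum_le_card_mul_sum_sq
      _ = _ := by ring
  have hg_nonpos : ∀ t ∈ Icc a b, g t ≤ 0 := fun t ht => by
    simpa [gronwallBound_ε0_δ0] using le_gronwallBound_of_liminf_deriv_right_le (δ := 0) hg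
      (fun t ht r hr => (hg' t ht).liminf_right_slope_le hr)
      (by simp [g, negPart_eq_zero.2 (ha _)]) bound t ht
  intro t ht i
  have hg0 : g t = 0 := le_antisymm (hg_nonpos t ht) (Finset.sum_nonneg fun j _ => sq_nonneg _)
  have hsq := (Finset.sum_eq_zero_iff_of_nonneg fun j _ => sq_nonneg (X t j)⁻).1 hg0 i
    (Finset.mem_univ i)
  exact negPart_eq_zero.1 (pow_eq_zero_iff two_ne_zero |>.1 hsq)

theorem nonneg_of_neg_deriv_le_rate_mul_sum_negPart {X F : ℝ → ι → ℝ} {k : ℝ → ℝ} {a b : ℝ}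
    (hX : ContinuousOn X (Icc a b)) (hX' : ∀ t ∈ Ico a b, HasDerivWithinAt X (F t) (Ici t) t)
    (hk : ContinuousOn k (Icc a b))
    (hF : ∀ t ∈ Ico a b, ∀ i, X t i < 0 → -F t i ≤ k t * ∑ j, (X t j)⁻)
    (ha : ∀ i, 0 ≤ X a i) :
    ∀ t ∈ Icc a b, ∀ i, 0 ≤ X t i := by
  obtain ⟨K, hK⟩ := isCompact_Icc.exists_bound_of_continuousOn hk
  refine nonneg_of_neg_deriv_le_mul_sum_negPart (K := K) hX hX' (fun t ht i hi => ?_) ha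
  refine (hF t ht i hi).trans (mul_le_mul_of_nonneg_right ?_ ?_)
  · exact (le_abs_self _).trans (hK t (Ico_subset_Icc_self ht))
  · exact Finset.sum_nonneg fun j _ => negPart_nonneg _

theorem neg_mul_le_abs_add_mul_abs_mul {p z κ S : ℝ} (hp : -(κ * S) ≤ p) (hz : -S ≤ z)
    (hκ : 0 ≤ κ) (hS : 0 ≤ S) : -(p * z) ≤ (|p| + κ * |z|) * S := by
  rcases le_total 0 z with h | h
  · rw [abs_of_nonneg h]
    nlinarith [abs_nonneg p, mul_nonneg hκ hS]
  · rw [abs_of_nonpos h]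
    nlinarith [le_abs_self p, abs_nonneg p, mul_nonneg hκ hS]

end NegativePart

namespace HIVModel

theorem neg_mul_le_force {p lam bA bC a c N s κ S : ℝ} (hp : p ∈ Icc (0 : ℝ) 1)
    (hlam : 0 ≤ lam) (hbA : 0 ≤ bA) (hbC : 0 ≤ bC) (hN : 0 ≤ N) (ha : -S ≤ a) (hc : -S ≤ c)
    (hs : -(κ * S) ≤ s) :
    -((p * lam * (bA + bC) / N + (1 - p) * lam * κ) * S) ≤
      p * lam * (bA * a + bC * c) / N + (1 - p) * lam * s := by
  have hpl : 0 ≤ p * lam := mul_nonneg hp.1 hlam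
  have hql : 0 ≤ (1 - p) * lam := mul_nonneg (sub_nonneg.2 hp.2) hlam
  have h1 : -(p * lam * (bA + bC) * S) / N ≤ p * lam * (bA * a + bC * c) / N := by
    gcongr
    nlinarith [mul_le_mul_of_nonneg_left ha (mul_nonneg hpl hbA),
      mul_le_mul_of_nonneg_left hc (mul_nonneg hpl hbC)]
  calc _ = -(p * lam * (bA + bC) * S) / N + (1 - p) * lam * -(κ * S) := by ring
    _ ≤ _ := add_le_add h1 (mul_le_mul_of_nonneg_left hs hql)

variable (alphaH alphaL rhoH rhoL mu x y deltaA deltaC vb betaA betaC lamH lamL piv rb : ℝ)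

-- The sums of the coefficients of `σ`, `φ_H`, `φ_L` as linear forms in the infected classes.
def sigmaSlope (X : State) : ℝ := (betaA + betaC) * (lamH + lamL) / theta lamH lamL X

def phiHSlope (X : State) : ℝ :=
  piv * lamH * (betaA + betaC) / NH X + (1 - piv) * lamH * sigmaSlope betaA betaC lamH lamL X

def phiLSlope (X : State) : ℝ :=
  piv * lamL * (betaA + betaC) / NL X + (1 - piv) * lamL * sigmaSlope betaA betaC lamH lamL X

def negPartRate (X : State) (uP uT : ℝ) : ℝ :=
  |phiH betaA betaC lamH lamL piv X| + |phiL betaA betaC lamH lamL piv X|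
    + phiHSlope betaA betaC lamH lamL piv X * |X 0| + phiLSlope betaA betaC lamH lamL piv X * |X 1|
    + uP * rb * Ntot X / (rb * NH X + NL X) + uT * rb * Ntot X / (rb * NH X + NL X)
    + uT * Ntot X / (rb * NH X + NL X)
    + rhoH + rhoL + x + y + deltaA + vb

variable {alphaH alphaL rhoH rhoL mu x y deltaA deltaC vb betaA betaC lamH lamL piv rb}

theorem neg_mul_le_sigma {X : State} {S : ℝ} (hX : ∀ j, -S ≤ X j) (hbetaA : 0 ≤ betaA)
    (hbetaC : 0 ≤ betaC) (hlamH : 0 ≤ lamH) (hlamL : 0 ≤ lamL)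
    (htheta : 0 ≤ theta lamH lamL X) :
    -(sigmaSlope betaA betaC lamH lamL X * S) ≤ sigma betaA betaC lamH lamL X := by
  rw [sigma, sigmaSlope, div_mul_eq_mul_div, ← neg_div]
  gcongr
  nlinarith [mul_le_mul_of_nonneg_left (hX 4) (mul_nonneg hbetaA hlamH),
    mul_le_mul_of_nonneg_left (hX 5) (mul_nonneg hbetaA hlamL),
    mul_le_mul_of_nonneg_left (hX 2) (mul_nonneg hbetaC hlamH),
    mul_le_mul_of_nonneg_left (hX 3) (mul_nonneg hbetaC hlamL)]

theorem neg_mul_le_phiH {X : State} {S : ℝ} (hX : ∀ j, -S ≤ X j) (hbetaA : 0 ≤ betaA)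
    (hbetaC : 0 ≤ betaC) (hlamH : 0 ≤ lamH) (hlamL : 0 ≤ lamL) (hpiv : piv ∈ Icc (0 : ℝ) 1)
    (hNH : 0 ≤ NH X) (htheta : 0 ≤ theta lamH lamL X) :
    -(phiHSlope betaA betaC lamH lamL piv X * S) ≤ phiH betaA betaC lamH lamL piv X :=
  neg_mul_le_force hpiv hlamH hbetaA hbetaC hNH (hX 4) (hX 2)
    (neg_mul_le_sigma hX hbetaA hbetaC hlamH hlamL htheta)

theorem neg_mul_le_phiL {X : State} {S : ℝ} (hX : ∀ j, -S ≤ X j) (hbetaA : 0 ≤ betaA)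
    (hbetaC : 0 ≤ betaC) (hlamH : 0 ≤ lamH) (hlamL : 0 ≤ lamL) (hpiv : piv ∈ Icc (0 : ℝ) 1)
    (hNL : 0 ≤ NL X) (htheta : 0 ≤ theta lamH lamL X) :
    -(phiLSlope betaA betaC lamH lamL piv X * S) ≤ phiL betaA betaC lamH lamL piv X :=
  neg_mul_le_force hpiv hlamL hbetaA hbetaC hNL (hX 5) (hX 3)
    (neg_mul_le_sigma hX hbetaA hbetaC hlamH hlamL htheta)

theorem phiHSlope_nonneg {X : State} (hbetaA : 0 ≤ betaA) (hbetaC : 0 ≤ betaC)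
    (hlamH : 0 ≤ lamH) (hlamL : 0 ≤ lamL) (hpiv : piv ∈ Icc (0 : ℝ) 1) (hNH : 0 ≤ NH X)
    (htheta : 0 ≤ theta lamH lamL X) : 0 ≤ phiHSlope betaA betaC lamH lamL piv X := by
  have := hpiv.1
  have := sub_nonneg.2 hpiv.2
  unfold phiHSlope sigmaSlope
  positivity

theorem phiLSlope_nonneg {X : State} (hbetaA : 0 ≤ betaA) (hbetaC : 0 ≤ betaC)
    (hlamH : 0 ≤ lamH) (hlamL : 0 ≤ lamL) (hpiv : piv ∈ Icc (0 : ℝ) 1) (hNL : 0 ≤ NL X)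
    (htheta : 0 ≤ theta lamH lamL X) : 0 ≤ phiLSlope betaA betaC lamH lamL piv X := by
  have := hpiv.1
  have := sub_nonneg.2 hpiv.2
  unfold phiLSlope sigmaSlope
  positivity

theorem neg_rhs_le_negPartRate_mul (halphaH : 0 ≤ alphaH) (halphaL : 0 ≤ alphaL)
    (hrhoH : 0 ≤ rhoH) (hrhoL : 0 ≤ rhoL) (hmu : 0 ≤ mu) (hx : 0 ≤ x) (hy : 0 ≤ y)
    (hdeltaA : 0 ≤ deltaA) (hdeltaC : 0 ≤ deltaC) (hvb : 0 ≤ vb) (hbetaA : 0 ≤ betaA)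
    (hbetaC : 0 ≤ betaC) (hlamH : 0 ≤ lamH) (hlamL : 0 ≤ lamL) (hpiv : piv ∈ Icc (0 : ℝ) 1)
    (hrb : 0 ≤ rb) {X : State} {uP uT : ℝ} (huP : 0 ≤ uP) (huT : 0 ≤ uT) (hNH : 0 ≤ NH X)
    (hNL : 0 ≤ NL X) {i : Fin 9} (hi : X i < 0) :
    -rhs alphaH alphaL rhoH rhoL mu x y deltaA deltaC vb betaA betaC lamH lamL piv rb X uP uT i ≤
      negPartRate rhoH rhoL x y deltaA vb betaA betaC lamH lamL piv rb X uP uT *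
        ∑ j, (X j)⁻ := by
  set S := ∑ j, (X j)⁻
  have hX : ∀ j, -S ≤ X j := neg_sum_negPart_le X
  have hm : ∀ j, -X j ≤ S := fun j => neg_le.1 (hX j)
  have hS : 0 ≤ S := Finset.sum_nonneg fun j _ => negPart_nonneg (X j)
  have h08 : -(X 0 + X 8) ≤ S := by
    have := Finset.sum_le_sum_of_subset_of_nonneg (Finset.subset_univ {0, 8})
      fun j _ _ => negPart_nonneg (X j)
    rw [Finset.sum_pair (by decide)] at this
    linarith [neg_le_negPart (X 0), neg_le_negPart (X 8)]
  have htheta : 0 ≤ theta lamH lamL X := by unfold theta; positivity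
  have hκH := phiHSlope_nonneg hbetaA hbetaC hlamH hlamL hpiv hNH htheta
  have hκL := phiLSlope_nonneg hbetaA hbetaC hlamH hlamL hpiv hNL htheta
  have hφH := neg_mul_le_abs_add_mul_abs_mul
    (neg_mul_le_phiH hX hbetaA hbetaC hlamH hlamL hpiv hNH htheta) (hX 0) hκH hS
  have hφL := neg_mul_le_abs_add_mul_abs_mul
    (neg_mul_le_phiL hX hbetaA hbetaC hlamH hlamL hpiv hNL htheta) (hX 1) hκL hS
  have hN : 0 ≤ Ntot X := by
    rw [show Ntot X = NH X + NL X by simp only [Ntot, NH, NL]; ring]; positivity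
  unfold negPartRate
  set cP := uP * rb * Ntot X / (rb * NH X + NL X)
  set cT := uT * rb * Ntot X / (rb * NH X + NL X)
  set cTL := uT * Ntot X / (rb * NH X + NL X)
  have hcP : 0 ≤ cP := by positivity
  have hcT : 0 ≤ cT := by positivity
  have hcTL : 0 ≤ cTL := by positivity
  have hzP : uP * zetaP rb X * Ntot X = cP * X 0 := by simp only [cP, zetaP]; ring
  have hzTH : uT * zetaTH rb X * Ntot X = cT * X 2 := by simp only [cT, zetaTH]; ring
  have hzTL : uT * zetaTL rb X * Ntot X = cTL * X 3 := by simp only [cTL, zetaTL]; ring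
  have habs : ∀ p, p * X i ≤ |p| * S := fun p => by
    nlinarith [neg_abs_le p, mul_le_mul_of_nonneg_left (hm i) (abs_nonneg p)]
  have hd : ∀ c, 0 ≤ c → c * X i ≤ 0 := fun c hc => mul_nonpos_of_nonneg_of_nonpos hc hi.le
  fin_cases i <;>
    simp only [Fin.zero_eta, Fin.mk_one, Fin.reduceFinMk, Fin.isValue, rhs, hzP, hzTH, hzTL,
      Matrix.cons_val_zero, Matrix.cons_val_one, Matrix.cons_val] at hi habs hd ⊢ <;>
    linarith [habs (phiH betaA betaC lamH lamL piv X), habs (phiL betaA betaC lamH lamL piv X),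
      hd _ hcP, hd _ hcT, hd _ hcTL, hd _ hrhoH, hd _ hrhoL, hd _ hmu, hd _ hdeltaA,
      hd _ hdeltaC, hd _ hvb, hd _ hx, hd _ hy,
      mul_le_mul_of_nonneg_left (hm 1) hrhoL, mul_le_mul_of_nonneg_left (hm 8) hx,
      mul_le_mul_of_nonneg_left h08 hrhoH, mul_le_mul_of_nonneg_left (hm 4) hdeltaA,
      mul_le_mul_of_nonneg_left (hm 3) hrhoL, mul_le_mul_of_nonneg_left (hm 6) hy,
      mul_le_mul_of_nonneg_left (hm 5) hdeltaA, mul_le_mul_of_nonneg_left (hm 2) hrhoH,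
      mul_le_mul_of_nonneg_left (hm 7) hy, mul_le_mul_of_nonneg_left (hm 5) hrhoL,
      mul_le_mul_of_nonneg_left (hm 4) hrhoH, mul_le_mul_of_nonneg_left (hm 2) hvb,
      mul_le_mul_of_nonneg_left (hm 7) hrhoL, mul_le_mul_of_nonneg_left (hm 2) hcT,
      mul_le_mul_of_nonneg_left (hm 3) hvb, mul_le_mul_of_nonneg_left (hm 6) hrhoH,
      mul_le_mul_of_nonneg_left (hm 3) hcTL, mul_le_mul_of_nonneg_left (hm 0) hcP,
      mul_nonneg (abs_nonneg (phiH betaA betaC lamH lamL piv X)) hS,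
      mul_nonneg (abs_nonneg (phiL betaA betaC lamH lamL piv X)) hS,
      mul_nonneg (mul_nonneg hκH (abs_nonneg (X 0))) hS,
      mul_nonneg (mul_nonneg hκL (abs_nonneg (X 1))) hS,
      mul_nonneg hcP hS, mul_nonneg hcT hS, mul_nonneg hcTL hS, mul_nonneg hrhoH hS,
      mul_nonneg hrhoL hS, mul_nonneg hx hS, mul_nonneg hy hS, mul_nonneg hdeltaA hS,
      mul_nonneg hvb hS]

@[fun_prop] theorem continuous_NH : Continuous NH := by unfold NH; fun_prop

@[fun_prop] theorem continuous_NL : Continuous NL := by unfold NL; fun_prop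

@[fun_prop] theorem continuous_Ntot : Continuous Ntot := by unfold Ntot; fun_prop

@[fun_prop] theorem continuous_theta (lamH lamL : ℝ) : Continuous (theta lamH lamL) := by
  unfold theta; fun_prop

theorem continuousOn_negPartRate {rhoH rhoL x y deltaA vb betaA betaC lamH lamL piv rb : ℝ}
    {X : ℝ → State} {uP uT : ℝ → ℝ} {s : Set ℝ} (hX : ContinuousOn X s)
    (huP : ContinuousOn uP s) (huT : ContinuousOn uT s) (hNH : ∀ t ∈ s, NH (X t) ≠ 0)
    (hNL : ∀ t ∈ s, NL (X t) ≠ 0) (htheta : ∀ t ∈ s, theta lamH lamL (X t) ≠ 0)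
    (hden : ∀ t ∈ s, rb * NH (X t) + NL (X t) ≠ 0) :
    ContinuousOn (fun t => negPartRate rhoH rhoL x y deltaA vb betaA betaC lamH lamL piv rb
      (X t) (uP t) (uT t)) s := by
  unfold negPartRate phiHSlope phiLSlope sigmaSlope phiH phiL sigma
  fun_prop (disch := assumption)

end HIVModel

open HIVModel in
theorem hiv_solution_nonneg_general
    (alphaH alphaL rhoH rhoL mu x y deltaA deltaC vb betaA betaC lamH lamL piv rb : ℝ)
    (halphaH : 0 ≤ alphaH) (halphaL : 0 ≤ alphaL) (hrhoH : 0 ≤ rhoH) (hrhoL : 0 ≤ rhoL)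
    (hmu : 0 ≤ mu) (hx : 0 ≤ x) (hy : 0 ≤ y) (hdeltaA : 0 ≤ deltaA) (hdeltaC : 0 ≤ deltaC)
    (hvb : 0 ≤ vb) (hbetaA : 0 ≤ betaA) (hbetaC : 0 ≤ betaC)
    (hlamH : 0 ≤ lamH) (hlamL : 0 ≤ lamL)
    (hpiv : piv ∈ Set.Icc (0 : ℝ) 1) (hrb : 0 < rb)
    (t₀ T : ℝ)
    (uP uT : ℝ → ℝ)
    (huP_cont : ContinuousOn uP (Set.Icc t₀ T)) (huT_cont : ContinuousOn uT (Set.Icc t₀ T))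
    (huP : ∀ t ∈ Set.Icc t₀ T, 0 ≤ uP t) (huT : ∀ t ∈ Set.Icc t₀ T, 0 ≤ uT t)
    (X : ℝ → State)
    (hX : ∀ t ∈ Set.Icc t₀ T,
      HasDerivAt X
        (rhs alphaH alphaL rhoH rhoL mu x y deltaA deltaC vb betaA betaC lamH lamL piv rb
          (X t) (uP t) (uT t)) t)
    (hNH : ∀ t ∈ Set.Icc t₀ T, 0 < NH (X t))
    (hNL : ∀ t ∈ Set.Icc t₀ T, 0 < NL (X t))
    (htheta : ∀ t ∈ Set.Icc t₀ T, 0 < theta lamH lamL (X t))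
    (hX₀ : ∀ i, 0 ≤ X t₀ i) :
    ∀ t ∈ Set.Icc t₀ T, ∀ i, 0 ≤ X t i := by
  have hXc : ContinuousOn X (Icc t₀ T) := fun t ht => (hX t ht).continuousAt.continuousWithinAt
  have hden : ∀ t ∈ Icc t₀ T, rb * NH (X t) + NL (X t) ≠ 0 := fun t ht => by
    have := hNH t ht
    have := hNL t ht
    positivity
  have hF : ∀ t ∈ Ico t₀ T, ∀ i, X t i < 0 → _ := fun t ht i hi =>
    have ht' := Ico_subset_Icc_self ht
    neg_rhs_le_negPartRate_mul halphaH halphaL hrhoH hrhoL hmu hx hy hdeltaA hdeltaC hvb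
      hbetaA hbetaC hlamH hlamL hpiv hrb.le (huP t ht') (huT t ht') (hNH t ht').le
      (hNL t ht').le hi
  exact nonneg_of_neg_deriv_le_rate_mul_sum_negPart hXc
    (fun t ht => (hX t (Ico_subset_Icc_self ht)).hasDerivWithinAt)
    (continuousOn_negPartRate hXc huP_cont huT_cont (fun t ht => (hNH t ht).ne')
      (fun t ht => (hNL t ht).ne') (fun t ht => (htheta t ht).ne') hden) hF hX₀

open HIVModel in
/-- Nonnegativity of solutions of the HIV model system: with nonnegative parameters,
`π ∈ [0,1]`, `r_b > 0`, continuous nonnegative controls `u_P, u_T` on `[t₀, T]`, and a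
solution `X` of `X'(t) = F(X(t), u_P(t), u_T(t))` on `[t₀, T]` along which
`N_H > 0`, `N_L > 0`, `θ > 0` and `r_b N_H + N_L > 0`, if all components of `X(t₀)` are
nonnegative then all components of `X(t)` are nonnegative for every `t ∈ [t₀, T]`. -/
theorem hiv_solution_nonneg
    (alphaH alphaL rhoH rhoL mu x y deltaA deltaC vb betaA betaC lamH lamL piv rb : ℝ)
    (halphaH : 0 ≤ alphaH) (halphaL : 0 ≤ alphaL) (hrhoH : 0 ≤ rhoH) (hrhoL : 0 ≤ rhoL)
    (hmu : 0 ≤ mu) (hx : 0 ≤ x) (hy : 0 ≤ y) (hdeltaA : 0 ≤ deltaA) (hdeltaC : 0 ≤ deltaC)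
    (hvb : 0 ≤ vb) (hbetaA : 0 ≤ betaA) (hbetaC : 0 ≤ betaC)
    (hlamH : 0 ≤ lamH) (hlamL : 0 ≤ lamL)
    (hpiv : piv ∈ Set.Icc (0 : ℝ) 1) (hrb : 0 < rb)
    (t₀ T : ℝ) (ht : t₀ ≤ T)
    (uP uT : ℝ → ℝ)
    (huP_cont : ContinuousOn uP (Set.Icc t₀ T)) (huT_cont : ContinuousOn uT (Set.Icc t₀ T))
    (huP : ∀ t ∈ Set.Icc t₀ T, 0 ≤ uP t) (huT : ∀ t ∈ Set.Icc t₀ T, 0 ≤ uT t)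
    (X : ℝ → State)
    (hX : ∀ t ∈ Set.Icc t₀ T,
      HasDerivAt X
        (rhs alphaH alphaL rhoH rhoL mu x y deltaA deltaC vb betaA betaC lamH lamL piv rb
          (X t) (uP t) (uT t)) t)
    (hNH : ∀ t ∈ Set.Icc t₀ T, 0 < NH (X t))
    (hNL : ∀ t ∈ Set.Icc t₀ T, 0 < NL (X t))
    (htheta : ∀ t ∈ Set.Icc t₀ T, 0 < theta lamH lamL (X t))
    (hden : ∀ t ∈ Set.Icc t₀ T, 0 < rb * NH (X t) + NL (X t))
    (hX₀ : ∀ i, 0 ≤ X t₀ i) :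
    ∀ t ∈ Set.Icc t₀ T, ∀ i, 0 ≤ X t i :=
  hiv_solution_nonneg_general alphaH alphaL rhoH rhoL mu x y deltaA deltaC vb betaA betaC lamH lamL
    piv rb halphaH halphaL hrhoH hrhoL hmu hx hy hdeltaA hdeltaC hvb hbetaA hbetaC hlamH hlamL hpiv
    hrb t₀ T uP uT huP_cont huT_cont huP huT X hX hNH hNL htheta hX₀
end
end
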